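/- arXiv:2603.27291 — 2 statements merged into one kernel-verified Lean document; each statement's English description precedes it below -/
import Mathlib

section
/- Let K be a field and σ ∈ Aut(K). In the skew polynomial ring K[t;σ], let τ ∈ Aut(K), k a positive integer, and α ∈ K×. The map G determined by G(c) = τ(c) for all c ∈ K and G(t) = α t^k extends to a ring homomorphism K[t;σ] → K[t;σ] if and only if τ σ τ⁻¹ = σ^k. -/
/-!
Every element of `K[t;σ]` is uniquely `Σ cᵢ tⁱ`, and the multiplication of such sums is
determined by `t c = σ(c) t`. Hence `K[t;σ]` has the universal property of a skew polynomial
ring: a ring map `φ` out of `K` together with an element `s` satisfying `s φ(c) = φ(σ c) s`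
extends to a ring map sending `c ↦ φ(c)`, `t ↦ s`. For `φ = τ` and `s = α tᵏ` the commutation rule reads
`α σᵏ(τ c) tᵏ = τ(σ c) α tᵏ`, which by uniqueness of coefficients and `α ≠ 0` is exactly
`σᵏ τ = τ σ`.
-/

/-- `R` is the skew (twisted) polynomial ring `K[t;σ]`: `K` embeds via `ι`, the variable
`t` satisfies `t·c = σ(c)·t`, and every element is uniquely of the form `Σ ι(c_i) t^i`. -/
structure IsSkewPolynomialRing (K : Type*) [Field K] (σ : K ≃+* K)
    (R : Type*) [Ring R] (ι : K →+* R) (t : R) : Prop where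
  t_mul : ∀ c : K, t * ι c = ι (σ c) * t
  repr_unique : ∀ x : R, ∃! f : ℕ →₀ K, x = f.sum fun i c => ι c * t ^ i

open Finsupp

section Monomials

variable {K R : Type*} [Semiring K] [Semiring R]

noncomputable def evalMonomials (φ : K →+* R) (s : R) : (ℕ →₀ K) →+ R :=
  liftAddHom fun i => (AddMonoidHom.mulRight (s ^ i)).comp φ.toAddMonoidHom

theorem evalMonomials_apply (φ : K →+* R) (s : R) (f : ℕ →₀ K) :
    evalMonomials φ s f = f.sum fun i c => φ c * s ^ i :=
  liftAddHom_apply _ f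

theorem evalMonomials_single (φ : K →+* R) (s : R) (i : ℕ) (c : K) :
    evalMonomials φ s (single i c) = φ c * s ^ i :=
  liftAddHom_apply_single _ i c

/-- The product of coefficient families in `K[t;σ]`. -/
noncomputable def skewMul (σ : K ≃+* K) (f g : ℕ →₀ K) : ℕ →₀ K :=
  f.sum fun i c => g.sum fun j d => single (i + j) (c * (σ ^ i) d)

variable {σ : K ≃+* K} {φ : K →+* R} {s : R}

theorem pow_mul_eq_of_mul_eq (hs : ∀ c, s * φ c = φ (σ c) * s) (i : ℕ) (c : K) :
    s ^ i * φ c = φ ((σ ^ i) c) * s ^ i := by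
  induction i generalizing c with
  | zero => simp
  | succ n ih =>
    rw [pow_succ, mul_assoc, hs, ← mul_assoc, ih, mul_assoc, pow_succ σ, RingAut.mul_apply]

theorem monomial_mul_monomial_of_mul_eq (hs : ∀ c, s * φ c = φ (σ c) * s) (i j : ℕ) (c d : K) :
    (φ c * s ^ i) * (φ d * s ^ j) = φ (c * (σ ^ i) d) * s ^ (i + j) := by
  rw [mul_assoc, ← mul_assoc (s ^ i), pow_mul_eq_of_mul_eq hs, map_mul, pow_add]
  simp only [mul_assoc]

theorem evalMonomials_skewMul (hs : ∀ c, s * φ c = φ (σ c) * s) (f g : ℕ →₀ K) :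
    evalMonomials φ s (skewMul σ f g) = evalMonomials φ s f * evalMonomials φ s g := by
  simp only [skewMul, map_finsuppSum, evalMonomials_single]
  rw [evalMonomials_apply, evalMonomials_apply, sum_mul]
  simp only [mul_sum, monomial_mul_monomial_of_mul_eq hs]

end Monomials

namespace IsSkewPolynomialRing

variable {K : Type*} [Field K] {σ : K ≃+* K} {R : Type*} [Ring R] {ι : K →+* R} {t : R}
  (h : IsSkewPolynomialRing K σ R ι t)
include h

theorem bijective_evalMonomials : Function.Bijective (evalMonomials ι t) := by
  refine ⟨fun f g hfg => ?_, fun x => ?_⟩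
  · obtain ⟨_, _, huniq⟩ := h.repr_unique (evalMonomials ι t f)
    rw [huniq f (evalMonomials_apply ι t f), huniq g (by rw [hfg, evalMonomials_apply])]
  · obtain ⟨f, hf, _⟩ := h.repr_unique x
    exact ⟨f, by rw [evalMonomials_apply, hf]⟩

theorem coeff_eq_of_monomial_eq {m : ℕ} {a b : K} (hab : ι a * t ^ m = ι b * t ^ m) : a = b := by
  rw [← evalMonomials_single, ← evalMonomials_single] at hab
  exact single_injective m (h.bijective_evalMonomials.1 hab)

noncomputable def coeffs : R ≃+ (ℕ →₀ K) :=
  (AddEquiv.ofBijective (evalMonomials ι t) h.bijective_evalMonomials).symm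

theorem evalMonomials_coeffs (x : R) : evalMonomials ι t (h.coeffs x) = x :=
  (AddEquiv.ofBijective _ h.bijective_evalMonomials).apply_symm_apply x

theorem coeffs_evalMonomials (f : ℕ →₀ K) : h.coeffs (evalMonomials ι t f) = f :=
  (AddEquiv.ofBijective _ h.bijective_evalMonomials).symm_apply_apply f

theorem coeffs_mul (x y : R) : h.coeffs (x * y) = skewMul σ (h.coeffs x) (h.coeffs y) := by
  rw [← h.coeffs_evalMonomials (skewMul σ _ _), evalMonomials_skewMul h.t_mul,
    h.evalMonomials_coeffs, h.evalMonomials_coeffs]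

theorem coeffs_monomial (i : ℕ) (c : K) : h.coeffs (ι c * t ^ i) = single i c := by
  rw [← evalMonomials_single, h.coeffs_evalMonomials]

variable {S : Type*} [Ring S] {φ : K →+* S} {s : S}

noncomputable def lift (φ : K →+* S) (s : S) (hs : ∀ c, s * φ c = φ (σ c) * s) : R →+* S where
  toFun x := evalMonomials φ s (h.coeffs x)
  map_one' := by
    simpa [evalMonomials_single] using congrArg (evalMonomials φ s) (h.coeffs_monomial 0 1)
  map_mul' x y := by rw [h.coeffs_mul, evalMonomials_skewMul hs]
  map_zero' := by simp
  map_add' x y := by simp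

theorem lift_monomial (hs : ∀ c, s * φ c = φ (σ c) * s) (i : ℕ) (c : K) :
    h.lift φ s hs (ι c * t ^ i) = φ c * s ^ i := by
  simp only [lift, RingHom.coe_mk, MonoidHom.coe_mk, OneHom.coe_mk, h.coeffs_monomial,
    evalMonomials_single]

theorem lift_ι (hs : ∀ c, s * φ c = φ (σ c) * s) (c : K) : h.lift φ s hs (ι c) = φ c := by
  simpa using h.lift_monomial hs 0 c

theorem lift_t (hs : ∀ c, s * φ c = φ (σ c) * s) : h.lift φ s hs t = s := by
  simpa using h.lift_monomial hs 1 1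

theorem monomial_mul_const (k : ℕ) (α c : K) :
    (ι α * t ^ k) * ι c = ι (α * (σ ^ k) c) * t ^ k := by
  rw [mul_assoc, pow_mul_eq_of_mul_eq h.t_mul, ← mul_assoc, map_mul]

theorem pow_comp_eq_comp_of_ringHom {τ : K ≃+* K} {k : ℕ} {α : K} (hα : α ≠ 0) (G : R →+* R)
    (hGι : ∀ c, G (ι c) = ι (τ c)) (hGt : G t = ι α * t ^ k) (c : K) :
    (σ ^ k) (τ c) = τ (σ c) := by
  have hG := congrArg G (h.t_mul c)
  rw [map_mul, map_mul, hGι, hGι, hGt, h.monomial_mul_const, ← mul_assoc, ← map_mul] at hG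
  rw [mul_comm (τ (σ c))] at hG
  exact mul_left_cancel₀ hα (h.coeff_eq_of_monomial_eq hG)

end IsSkewPolynomialRing

theorem stmt4_general {K : Type*} [Field K] (σ : K ≃+* K) {R : Type*} [Ring R]
    (ι : K →+* R) (t : R) (h : IsSkewPolynomialRing K σ R ι t)
    (τ : K ≃+* K) (k : ℕ) (α : K) (hα : α ≠ 0) :
    (∃ G : R →+* R, (∀ c : K, G (ι c) = ι (τ c)) ∧ G t = ι α * t ^ k) ↔
      (∀ x : K, τ (σ (τ.symm x)) = (σ ^ k) x) := by
  constructor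
  · rintro ⟨G, hGι, hGt⟩ x
    simpa using (h.pow_comp_eq_comp_of_ringHom hα G hGι hGt (τ.symm x)).symm
  · intro hconj
    have hs : ∀ c, (ι α * t ^ k) * (ι.comp τ.toRingHom) c
        = (ι.comp τ.toRingHom) (σ c) * (ι α * t ^ k) := fun c => by
      have hc : (σ ^ k) (τ c) = τ (σ c) := by simpa using (hconj (τ c)).symm
      simp only [RingHom.comp_apply, RingEquiv.toRingHom_eq_coe, RingEquiv.coe_toRingHom,
        h.monomial_mul_const, hc, mul_comm α, map_mul, mul_assoc]
    exact ⟨h.lift _ _ hs, h.lift_ι hs, h.lift_t hs⟩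

/-- Let `K` be a field, `σ ∈ Aut(K)`, `τ ∈ Aut(K)`, `k` a positive integer
and `α ∈ K×`.  The map determined by `G(c) = τ(c)` for `c ∈ K` and `G(t) = α t^k`
extends to a ring homomorphism `K[t;σ] → K[t;σ]` if and only if `τ σ τ⁻¹ = σ^k`. -/
theorem stmt4 {K : Type*} [Field K] (σ : K ≃+* K) {R : Type*} [Ring R]
    (ι : K →+* R) (t : R) (h : IsSkewPolynomialRing K σ R ι t)
    (τ : K ≃+* K) (k : ℕ) (hk : 0 < k) (α : K) (hα : α ≠ 0) :
    (∃ G : R →+* R, (∀ c : K, G (ι c) = ι (τ c)) ∧ G t = ι α * t ^ k) ↔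
      (∀ x : K, τ (σ (τ.symm x)) = (σ ^ k) x) :=
  stmt4_general σ ι t h τ k α hα
end

section
/- In the skew polynomial ring K[t;σ], let k ≥ 2 and α, b ∈ K×, and suppose α b = σ^m(α) σ^k(b). Then in K[t;σ]/K[t;σ](t^m−b), for every positive integer s one has (α t^k)^s = N_s^{σ^k}(α) · ∏_{i=1}^{⌊sk/m⌋} σ^{sk−im}(b) · t^{[sk]_m}, where [sk]_m is the residue of sk modulo m in [0, m−1]. -/
/-- Twisted norm `N_s^ρ(α) = ρ^{s-1}(α) ⋯ ρ(α) α`. -/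
noncomputable def twistedNorm {K : Type*} [Field K] (ρ : K → K) (s : ℕ) (α : K) : K :=
  ∏ j ∈ Finset.range s, ρ^[j] α

/-- Multiplication of the Petit algebra `K[t;σ]/K[t;σ](t^m − b)` in the coordinates of
the basis `1, t, …, t^{m-1}`. -/
noncomputable def petitMul {K : Type*} [Field K] (σ : K ≃+* K) (m : ℕ) (b : K)
    (f g : Fin m → K) : Fin m → K :=
  fun r => ∑ i : Fin m, ∑ j : Fin m,
    if (i : ℕ) + (j : ℕ) = (r : ℕ) then f i * (⇑σ)^[(i : ℕ)] (g j)
    else if (i : ℕ) + (j : ℕ) = (r : ℕ) + m then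
      f i * (⇑σ)^[(i : ℕ)] (g j) * (⇑σ)^[(r : ℕ)] b
    else 0

/-- Powers in the Petit algebra, computed by iterated left multiplication. -/
noncomputable def petitPow {K : Type*} [Field K] (σ : K ≃+* K) (m : ℕ) (b : K)
    (x : Fin m → K) : ℕ → (Fin m → K)
  | 0 => fun i => if (i : ℕ) = 0 then 1 else 0
  | s + 1 => petitMul σ m b x (petitPow σ m b x s)

/-- The image of `t^k` in `K[t;σ]/K[t;σ](t^m − b)`: writing `k = qm + r`, `t^k` reduces
to `(∏_{i=1}^{q} σ^{k−im}(b)) t^r`. -/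
noncomputable def petitTPow {K : Type*} [Field K] (σ : K ≃+* K) (m : ℕ) (b : K)
    (k : ℕ) : Fin m → K :=
  fun r => if (r : ℕ) = k % m then ∏ i ∈ Finset.Icc 1 (k / m), (⇑σ)^[k - i * m] b else 0

section Aux
variable {K : Type*} [Field K] (σ : K ≃+* K)

lemma aux_iter_prod (a : ℕ) (q : ℕ) (f : ℕ → K) :
    (⇑σ)^[a] (∏ i ∈ Finset.range q, f i) = ∏ i ∈ Finset.range q, (⇑σ)^[a] (f i) := by
  induction q with
  | zero => simp
  | succ q ih => rw [Finset.prod_range_succ, Finset.prod_range_succ, iterate_map_mul, ih]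

lemma aux_Icc_range (m : ℕ) (b : K) : ∀ q n r : ℕ, n = q * m + r →
    ∏ i ∈ Finset.Icc 1 q, (⇑σ)^[n - i * m] b = ∏ i ∈ Finset.range q, (⇑σ)^[r + i * m] b := by
  intro q
  induction q with
  | zero => simp
  | succ q ih =>
    intro n r hn
    rw [Finset.prod_Icc_succ_top (by omega), Finset.prod_range_succ']
    have h1 : n - (q + 1) * m = r := by
      rw [hn, add_comm ((q + 1) * m) r, Nat.add_sub_cancel]
    rw [h1, ih n (m + r) (by rw [hn]; ring)]
    congr 1
    · apply Finset.prod_congr rfl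
      intro i _
      congr 1
      ring
    · congr 1
      ring

lemma aux_tn (k s : ℕ) (α : K) :
    twistedNorm ((⇑σ)^[k]) s α = ∏ j ∈ Finset.range s, (⇑σ)^[j * k] α := by
  unfold twistedNorm
  apply Finset.prod_congr rfl
  intro j _
  rw [← Function.iterate_mul, Nat.mul_comm]

lemma aux_telescope (m k : ℕ) (α b : K)
    (hstep : ∀ j : ℕ, (⇑σ)^[j + m] α * (⇑σ)^[j + k] b = (⇑σ)^[j] α * (⇑σ)^[j] b) :
    ∀ (q c : ℕ), (⇑σ)^[c + q * m] α * ∏ i ∈ Finset.range q, (⇑σ)^[c + i * m + k] b =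
      (⇑σ)^[c] α * ∏ i ∈ Finset.range q, (⇑σ)^[c + i * m] b := by
  intro q
  induction q with
  | zero => simp
  | succ q ih =>
    intro c
    rw [Finset.prod_range_succ, Finset.prod_range_succ,
      show c + (q + 1) * m = (c + q * m) + m by ring]
    have h1 := hstep (c + q * m)
    have h2 := ih c
    rw [show c + q * m + k = (c + q * m) + k by ring] at *
    linear_combination (∏ i ∈ Finset.range q, (⇑σ)^[c + i * m + k] b) * h1 +
      ((⇑σ)^[c + q * m] b) * h2

lemma aux_key (m k q1 i0 : ℕ) (α b : K) (hk : k = q1 * m + i0)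
    (hstep : ∀ j : ℕ, (⇑σ)^[j + m] α * (⇑σ)^[j + k] b = (⇑σ)^[j] α * (⇑σ)^[j] b) :
    ∀ s : ℕ,
      α * (∏ i ∈ Finset.range q1, (⇑σ)^[i0 + i * m] b) *
          ∏ j ∈ Finset.range s, (⇑σ)^[j * k + i0] α =
      (⇑σ)^[s * k] α * (∏ j ∈ Finset.range s, (⇑σ)^[j * k] α) *
          ∏ i ∈ Finset.range q1, (⇑σ)^[s * k + i0 + i * m] b := by
  intro s
  induction s with
  | zero => simp [mul_comm]
  | succ s ih =>
    rw [Finset.prod_range_succ, Finset.prod_range_succ]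
    have hL := aux_telescope σ m k α b hstep q1 (s * k + i0)
    rw [show s * k + i0 + q1 * m = (s + 1) * k by rw [hk]; ring] at hL
    have hL' : (⇑σ)^[(s + 1) * k] α *
        ∏ i ∈ Finset.range q1, (⇑σ)^[(s + 1) * k + i0 + i * m] b =
        (⇑σ)^[s * k + i0] α * ∏ i ∈ Finset.range q1, (⇑σ)^[s * k + i0 + i * m] b := by
      rw [← hL]
      congr 1
      apply Finset.prod_congr rfl
      intro i _
      congr 1
      rw [hk]; ring
    linear_combination ((⇑σ)^[s * k + i0] α) * ih -
      ((⇑σ)^[s * k] α * ∏ j ∈ Finset.range s, (⇑σ)^[j * k] α) * hL'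

lemma aux_main (m k : ℕ) (α b : K) (hm : 0 < m)
    (hstep : ∀ j : ℕ, (⇑σ)^[j + m] α * (⇑σ)^[j + k] b = (⇑σ)^[j] α * (⇑σ)^[j] b)
    (s : ℕ) :
    (α * ∏ i ∈ Finset.range (k / m), (⇑σ)^[k % m + i * m] b) *
      (⇑σ)^[k % m] ((∏ j ∈ Finset.range s, (⇑σ)^[j * k] α) *
        ∏ i ∈ Finset.range (s * k / m), (⇑σ)^[s * k % m + i * m] b) *
      (if k % m + s * k % m < m then 1 else (⇑σ)^[(k % m + s * k % m) % m] b) =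
    (∏ j ∈ Finset.range (s + 1), (⇑σ)^[j * k] α) *
      ∏ i ∈ Finset.range ((s + 1) * k / m), (⇑σ)^[(s + 1) * k % m + i * m] b := by
  have hk : k = (k / m) * m + k % m := (Nat.div_add_mod' k m).symm
  have hn : s * k = (s * k / m) * m + s * k % m := (Nat.div_add_mod' _ _).symm
  have hio : k % m < m := Nat.mod_lt _ hm
  have hrn : s * k % m < m := Nat.mod_lt _ hm
  have key := aux_key σ m k (k / m) (k % m) α b hk hstep s
  rw [iterate_map_mul, aux_iter_prod, aux_iter_prod]
  have e1 : ∀ j : ℕ, (⇑σ)^[k % m] ((⇑σ)^[j * k] α) = (⇑σ)^[j * k + k % m] α := by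
    intro j; rw [← Function.iterate_add_apply, Nat.add_comm]
  have e2 : ∀ i : ℕ, (⇑σ)^[k % m] ((⇑σ)^[s * k % m + i * m] b) =
      (⇑σ)^[k % m + s * k % m + i * m] b := by
    intro i; rw [← Function.iterate_add_apply]; congr 1; ring
  simp only [e1, e2]
  by_cases hc : k % m + s * k % m < m
  · rw [if_pos hc, mul_one]
    have hdm : (s + 1) * k / m = s * k / m + k / m ∧ (s + 1) * k % m = k % m + s * k % m := by
      refine (Nat.div_mod_unique hm).mpr ⟨?_, hc⟩
      have h2 : (s + 1) * k = (s * k / m) * m + s * k % m + ((k / m) * m + k % m) := by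
        rw [← hn, ← hk]; ring
      rw [h2]; ring
    rw [hdm.1, hdm.2, Finset.prod_range_succ, Finset.prod_range_add]
    have e3 : ∀ i : ℕ, (⇑σ)^[k % m + s * k % m + (s * k / m + i) * m] b =
        (⇑σ)^[s * k + k % m + i * m] b := by
      intro i; congr 1
      conv_rhs => rw [hn]
      ring
    simp only [e3]
    linear_combination (∏ i ∈ Finset.range (s * k / m), (⇑σ)^[k % m + s * k % m + i * m] b) * key
  · rw [if_neg hc]
    have hdm : (s + 1) * k / m = s * k / m + k / m + 1 ∧
        (s + 1) * k % m = k % m + s * k % m - m := by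
      refine (Nat.div_mod_unique hm).mpr ⟨?_, by omega⟩
      have h2 : (s + 1) * k = (s * k / m) * m + s * k % m + ((k / m) * m + k % m) := by
        rw [← hn, ← hk]; ring
      rw [h2, Nat.mul_add, Nat.mul_add, Nat.mul_one,
        Nat.mul_comm m (s * k / m), Nat.mul_comm m (k / m)]
      generalize s * k / m * m = A
      generalize k / m * m = B
      omega
    have hmod2 : (k % m + s * k % m) % m = k % m + s * k % m - m := by
      rw [Nat.mod_eq_sub_mod (by omega), Nat.mod_eq_of_lt (by omega)]
    rw [hmod2, hdm.1, hdm.2, Finset.prod_range_succ, Finset.prod_range_succ',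
      Finset.prod_range_add]
    have e4 : ∀ i : ℕ, (⇑σ)^[k % m + s * k % m - m + (i + 1) * m] b =
        (⇑σ)^[k % m + s * k % m + i * m] b := by
      intro i; congr 1
      have h5 : k % m + s * k % m - m + (i + 1) * m =
          (k % m + s * k % m - m + m) + i * m := by ring
      rw [h5, show k % m + s * k % m - m + m = k % m + s * k % m by omega]
    have e6 : ∀ i : ℕ, (⇑σ)^[k % m + s * k % m + (s * k / m + i) * m] b =
        (⇑σ)^[s * k + k % m + i * m] b := by
      intro i; congr 1
      conv_rhs => rw [hn]
      ring
    simp only [e4, e6, Nat.zero_mul, Nat.add_zero]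
    linear_combination ((∏ i ∈ Finset.range (s * k / m), (⇑σ)^[k % m + s * k % m + i * m] b) *
      (⇑σ)^[k % m + s * k % m - m] b) * key

lemma petitMul_single (m : ℕ) (b : K)
    (i0 j0 : ℕ) (hi0 : i0 < m) (hj0 : j0 < m) (u v : K) :
    petitMul σ m b (fun r => if (r : ℕ) = i0 then u else 0)
      (fun r => if (r : ℕ) = j0 then v else 0) =
    fun r : Fin m => if (r : ℕ) = (i0 + j0) % m then
        (if i0 + j0 < m then u * (⇑σ)^[i0] v else u * (⇑σ)^[i0] v * (⇑σ)^[(i0 + j0) % m] b)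
      else 0 := by
  funext r
  unfold petitMul
  rw [Finset.sum_eq_single (⟨i0, hi0⟩ : Fin m)]
  rotate_left
  · intro i _ hne
    have h : (i : ℕ) ≠ i0 := by
      intro h; exact hne (Fin.ext h)
    simp [h]
  · intro h; exact absurd (Finset.mem_univ _) h
  rw [Finset.sum_eq_single (⟨j0, hj0⟩ : Fin m)]
  rotate_left
  · intro j _ hne
    have h : (j : ℕ) ≠ j0 := by
      intro h; exact hne (Fin.ext h)
    simp [h]
  · intro h; exact absurd (Finset.mem_univ _) h
  simp only [Fin.val_mk, eq_self_iff_true, if_true]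
  have hr : (r : ℕ) < m := r.2
  by_cases hc : i0 + j0 < m
  · have hmod : (i0 + j0) % m = i0 + j0 := Nat.mod_eq_of_lt hc
    rw [hmod]
    by_cases he : (r : ℕ) = i0 + j0
    · rw [if_pos (show i0 + j0 = (r : ℕ) from he.symm), if_pos he, if_pos hc]
    · rw [if_neg (show ¬ i0 + j0 = (r : ℕ) from fun h => he h.symm),
        if_neg (show ¬ i0 + j0 = (r : ℕ) + m by omega), if_neg he]
  · have hmod : (i0 + j0) % m = i0 + j0 - m := by
      rw [Nat.mod_eq_sub_mod (by omega), Nat.mod_eq_of_lt (by omega)]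
    rw [hmod]
    by_cases he : (r : ℕ) = i0 + j0 - m
    · rw [if_neg (show ¬ i0 + j0 = (r : ℕ) by omega),
        if_pos (show i0 + j0 = (r : ℕ) + m by omega), if_pos he, if_neg hc, he]
    · rw [if_neg (show ¬ i0 + j0 = (r : ℕ) by omega),
        if_neg (show ¬ i0 + j0 = (r : ℕ) + m by omega), if_neg he]

lemma petitPow_zero (m : ℕ) (b : K) (x : Fin m → K) :
    petitPow σ m b x 0 = fun i : Fin m => if (i : ℕ) = 0 then 1 else 0 := rfl

lemma petitPow_succ (m : ℕ) (b : K) (x : Fin m → K) (s : ℕ) :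
    petitPow σ m b x (s + 1) = petitMul σ m b x (petitPow σ m b x s) := rfl

end Aux

/-- In `K[t;σ]/K[t;σ](t^m−b)` with `k ≥ 2`, `α, b ∈ K×` and
`α b = σ^m(α) σ^k(b)`, for every positive integer `s` one has
`(α t^k)^s = N_s^{σ^k}(α) · ∏_{i=1}^{⌊sk/m⌋} σ^{sk−im}(b) · t^{[sk]_m}`,
where `[sk]_m` is the residue of `sk` modulo `m`. -/
theorem stmt12 {K : Type*} [Field K] (m : ℕ) (hm : 0 < m) (σ : K ≃+* K)
    (k : ℕ) (hk : 2 ≤ k) (α b : K) (hα : α ≠ 0) (hb : b ≠ 0)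
    (hcond : α * b = (⇑σ)^[m] α * (⇑σ)^[k] b) :
    ∀ s : ℕ, 0 < s →
      petitPow σ m b (fun r => α * petitTPow σ m b k r) s =
        fun r : Fin m =>
          if (r : ℕ) = (s * k) % m then
            twistedNorm ((⇑σ)^[k]) s α *
              ∏ i ∈ Finset.Icc 1 (s * k / m), (⇑σ)^[s * k - i * m] b
          else 0 := by
  have hstep : ∀ j : ℕ, (⇑σ)^[j + m] α * (⇑σ)^[j + k] b = (⇑σ)^[j] α * (⇑σ)^[j] b := by
    intro j
    have h := congrArg ((⇑σ)^[j]) hcond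
    rw [iterate_map_mul, iterate_map_mul, ← Function.iterate_add_apply,
      ← Function.iterate_add_apply] at h
    exact h.symm
  have hkd : k = (k / m) * m + k % m := (Nat.div_add_mod' k m).symm
  have hio : k % m < m := Nat.mod_lt _ hm
  have hx : (fun r => α * petitTPow σ m b k r) =
      fun r : Fin m => if (r : ℕ) = k % m then
        α * ∏ i ∈ Finset.range (k / m), (⇑σ)^[k % m + i * m] b else 0 := by
    funext r
    simp only [petitTPow, mul_ite, mul_zero]
    rw [aux_Icc_range σ m b (k / m) k (k % m) hkd]
  have main : ∀ s : ℕ, petitPow σ m b (fun r => α * petitTPow σ m b k r) (s + 1) =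
      fun r : Fin m =>
        if (r : ℕ) = (s + 1) * k % m then
          (∏ j ∈ Finset.range (s + 1), (⇑σ)^[j * k] α) *
            ∏ i ∈ Finset.range ((s + 1) * k / m), (⇑σ)^[(s + 1) * k % m + i * m] b
        else 0 := by
    intro s
    induction s with
    | zero =>
      rw [petitPow_succ, petitPow_zero, hx,
        petitMul_single σ m b (k % m) 0 hio hm _ 1]
      have hmain := aux_main σ m k α b hm hstep 0
      funext r
      simp only [Nat.add_zero, Nat.mod_eq_of_lt hio, Nat.zero_mul, Nat.zero_add,
        Nat.one_mul, if_pos (show k % m + 0 < m by omega)]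
      by_cases hrr : (r : ℕ) = k % m
      · rw [if_pos hrr, if_pos hrr, iterate_map_one, mul_one, Finset.prod_range_one,
          Nat.zero_mul, Function.iterate_zero_apply, if_pos hio]
      · rw [if_neg hrr, if_neg hrr]
    | succ s ih =>
      rw [petitPow_succ, ih, hx,
        petitMul_single σ m b (k % m) ((s + 1) * k % m) hio (Nat.mod_lt _ hm) _ _]
      have hmain := aux_main σ m k α b hm hstep (s + 1)
      have hidx : (k % m + (s + 1) * k % m) % m = (s + 1 + 1) * k % m := by
        conv_rhs => rw [show (s + 1 + 1) * k = k + (s + 1) * k by ring, Nat.add_mod]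
      funext r
      rw [hidx]
      by_cases hrr : (r : ℕ) = (s + 1 + 1) * k % m
      · rw [if_pos hrr, if_pos hrr]
        rw [show (s + 1 + 1) = (s + 1) + 1 from rfl] at hmain ⊢
        rw [← hmain]
        by_cases hc : k % m + (s + 1) * k % m < m
        · rw [if_pos hc, if_pos hc, mul_one]
        · rw [if_neg hc, if_neg hc, hidx,
            show (s + 1 + 1) = (s + 1) + 1 from rfl]
      · rw [if_neg hrr, if_neg hrr]
  intro s hs
  obtain ⟨t, rfl⟩ : ∃ t, s = t + 1 := ⟨s - 1, by omega⟩
  rw [main t, aux_tn]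
  have := aux_Icc_range σ m b ((t + 1) * k / m) ((t + 1) * k) ((t + 1) * k % m)
    (Nat.div_add_mod' _ _).symm
  rw [this]
end
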